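/- Let c > 0 and let f : ℝ → ℂ be a differentiable function satisfying deriv f x = (c·x)·(f x) for all x ∈ ℝ. If f is square-integrable on ℝ, then f is identically zero. (This shows the operator −∂ₓ + c·x has trivial kernel in L²(ℝ), the other half of the paper's local index computation ind(e₁∂ₓ + λλ_{ij}x·ē₁) = sgn(λ_{ij}).) -/

import Mathlib

open MeasureTheory

/-!
Multiplying by the integrating factor `exp (-c x² / 2)` shows that every solution is
`f x = f 0 · exp (c x² / 2)`. For `c ≥ 0` this gives `‖f 0‖ ≤ ‖f x‖` everywhere, so the constant
`f 0` is square-integrable over `ℝ`, which has infinite measure; hence `f 0 = 0`.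
-/

theorem hasDerivAt_cexp_neg_mul_sq_div_two (a : ℂ) (x : ℝ) :
    HasDerivAt (fun y : ℝ => Complex.exp (-(a * (y : ℂ) ^ 2 / 2)))
      (-(a * x) * Complex.exp (-(a * (x : ℂ) ^ 2 / 2))) x := by
  have hsq : HasDerivAt (fun y : ℝ => -(a * (y : ℂ) ^ 2 / 2)) (-(a * x)) x := by
    refine (((hasDerivAt_pow 2 (x : ℂ)).const_mul a).div_const 2).neg.comp_ofReal.congr_deriv ?_
    ring
  convert hsq.cexp using 1
  ring

theorem eq_mul_cexp_of_deriv_eq_mul (a : ℂ) {f : ℝ → ℂ} (hf : Differentiable ℝ f)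
    (hode : ∀ x : ℝ, deriv f x = a * x * f x) (x : ℝ) :
    f x = f 0 * Complex.exp (a * (x : ℂ) ^ 2 / 2) := by
  set g : ℝ → ℂ := fun y => f y * Complex.exp (-(a * (y : ℂ) ^ 2 / 2))
  have hg : ∀ y, HasDerivAt g 0 y := fun y => by
    have hfy : HasDerivAt f (a * y * f y) y := hode y ▸ (hf y).hasDerivAt
    exact (hfy.mul (hasDerivAt_cexp_neg_mul_sq_div_two a y)).congr_deriv (by ring)
  have hconst : g x = f 0 := by
    simpa [g] using
      is_const_of_deriv_eq_zero (fun y => (hg y).differentiableAt) (fun y => (hg y).deriv) x 0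
  rw [← hconst, mul_assoc, ← Complex.exp_add, neg_add_cancel, Complex.exp_zero, mul_one]

theorem one_le_norm_cexp_mul_sq_div_two {c : ℝ} (hc : 0 ≤ c) (x : ℝ) :
    1 ≤ ‖Complex.exp (c * (x : ℂ) ^ 2 / 2)‖ := by
  rw [Complex.norm_exp]
  norm_cast
  exact Real.one_le_exp (by positivity)

theorem MeasureTheory.MemLp.eq_zero_of_norm_const_le {α E : Type*} [MeasurableSpace α]
    {μ : Measure α} [NormedAddCommGroup E] {p : ENNReal} {f : α → E} {a : E} (hf : MemLp f p μ)
    (hp0 : p ≠ 0) (hp : p ≠ ⊤) (hμ : μ Set.univ = ⊤) (hle : ∀ x, ‖a‖ ≤ ‖f x‖) : a = 0 := by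
  have hconst : MemLp (fun _ => a) p μ :=
    hf.mono aestronglyMeasurable_const (Filter.Eventually.of_forall hle)
  rw [memLp_const_iff hp0 hp, hμ] at hconst
  simpa using hconst

/-- For `c > 0`, any square-integrable differentiable solution of `f' x = (c·x)·f x` on `ℝ`
vanishes identically: the operator `-∂ₓ + c·x` has trivial kernel in `L²(ℝ)`. -/
theorem ode_growing_gaussian_L2_trivial (c : ℝ) (hc : 0 < c) (f : ℝ → ℂ)
    (hf : Differentiable ℝ f)
    (hode : ∀ x : ℝ, deriv f x = ((c : ℂ) * (x : ℂ)) * f x)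
    (hL2 : MemLp f 2 volume) :
    ∀ x : ℝ, f x = 0 := by
  have hgauss := eq_mul_cexp_of_deriv_eq_mul (c : ℂ) hf hode
  have hf0 : f 0 = 0 := by
    refine hL2.eq_zero_of_norm_const_le two_ne_zero ENNReal.ofNat_ne_top Real.volume_univ
      fun x => ?_
    rw [hgauss x, norm_mul]
    exact le_mul_of_one_le_right (norm_nonneg _) (one_le_norm_cexp_mul_sq_div_two hc.le x)
  intro x
  rw [hgauss x, hf0, zero_mul]
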